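/- arXiv:1801.09327 — 3 statements merged into one kernel-verified Lean document; each statement's English description precedes it below -/
import Mathlib

section
/- Fix an integer k ≥ 1. Define c : ℕ → ℕ → ℤ by c i n = binom(i+k−1, i) if i = n; c i n = binom(i+k−1, i) + (if i ≥ 1 then binom(i+k−2, i−1) else 0) if i < n; and c i n = 0 if i > n. Then in the formal power series ring ℤ[[x,y]] one has (1 − y) · (1 − x·y)^k · (∑_{i,n≥0} c i n · x^i y^n) = 1 + x·y². (These c i n are the Betti numbers rk H^i(C_n(ℂ∖k),ℤ) of the unordered configuration spaces of the plane with k points removed, whose generating series is (1+xy²)/((1−y)(1−xy)^k).) -/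
/-- The bivariate generating series `∑_{i,n ≥ 0} c i n · x^i y^n ∈ ℤ[[x,y]]`
associated to a doubly-indexed integer sequence `c`. -/
def genSeries (c : ℕ → ℕ → ℤ) : MvPowerSeries (Fin 2) ℤ :=
  fun d => c (d 0) (d 1)

/-- The Betti numbers `rk H^i(C_n(ℂ∖k), ℤ)` of unordered configuration spaces
of the plane with `k` points removed. -/
def betti (k i n : ℕ) : ℤ :=
  if i = n then ((i + k - 1).choose i : ℤ)
  else if i < n then
    ((i + k - 1).choose i : ℤ) + (if 1 ≤ i then ((i + k - 2).choose (i - 1) : ℤ) else 0)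
  else 0

/-!
Since `Nat.multichoose k i = binom(i+k-1, i)`, Pascal's rule `multichoose_succ_succ` shows by
induction on `k` that `D_k := ∑ multichoose k i · (xy)^i` is the inverse of `(1 - xy)^k`.
Moreover `betti k i n` is the partial sum over `m ≤ n` of the coefficients of `x^i y^m` in
`(1 + xy²) D_k`, so multiplying its generating series by `1 - y` gives back `(1 + xy²) D_k`.
-/

open MvPowerSeries

lemma coeff_genSeries (c : ℕ → ℕ → ℤ) (d : Fin 2 →₀ ℕ) :
    coeff d (genSeries c) = c (d 0) (d 1) := rfl

lemma genSeries_add (c c' : ℕ → ℕ → ℤ) :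
    genSeries c + genSeries c' = genSeries fun i n => c i n + c' i n := rfl

lemma genSeries_sub (c c' : ℕ → ℕ → ℤ) :
    genSeries c - genSeries c' = genSeries fun i n => c i n - c' i n := rfl

lemma one_eq_genSeries :
    (1 : MvPowerSeries (Fin 2) ℤ) = genSeries fun i n => if i = 0 ∧ n = 0 then 1 else 0 := by
  ext d
  simp [coeff_one, coeff_genSeries, Finsupp.ext_iff, Fin.forall_fin_two]

lemma X_zero_pow_mul_X_one_pow_mul_genSeries (a b : ℕ) (c : ℕ → ℕ → ℤ) :
    X 0 ^ a * X 1 ^ b * genSeries c =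
      genSeries fun i n => if a ≤ i ∧ b ≤ n then c (i - a) (n - b) else 0 := by
  ext d
  rw [X_pow_eq, X_pow_eq, monomial_mul_monomial, one_mul, coeff_monomial_mul, one_mul,
    coeff_genSeries, coeff_genSeries]
  simp [Finsupp.le_def, Fin.forall_fin_two, Finsupp.single_apply]

def diagSeries (f : ℕ → ℤ) : MvPowerSeries (Fin 2) ℤ :=
  genSeries fun i n => if i = n then f i else 0

lemma one_sub_X_mul_X_mul_diagSeries (f : ℕ → ℤ) :
    (1 - X 0 * X 1) * diagSeries f = diagSeries fun i => f i - if 0 < i then f (i - 1) else 0 := by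
  have h := X_zero_pow_mul_X_one_pow_mul_genSeries 1 1 (fun i n => if i = n then f i else 0)
  rw [pow_one, pow_one] at h
  rw [sub_mul, one_mul, diagSeries, h, genSeries_sub, diagSeries]
  congr 1
  funext i n
  split_ifs <;> omega

lemma diagSeries_multichoose_zero : diagSeries (fun i => (Nat.multichoose 0 i : ℤ)) = 1 := by
  rw [one_eq_genSeries, diagSeries]
  congr 1
  funext i n
  rcases i with _ | i <;> simp [Nat.multichoose_zero_succ]
  omega

lemma one_sub_X_mul_X_mul_diagSeries_multichoose_succ (k : ℕ) :
    (1 - X 0 * X 1) * diagSeries (fun i => ((k + 1).multichoose i : ℤ)) =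
      diagSeries fun i => (k.multichoose i : ℤ) := by
  rw [one_sub_X_mul_X_mul_diagSeries]
  congr 1
  funext i
  rcases i with _ | i
  · simp [Nat.multichoose_zero_right]
  · simp [Nat.multichoose_succ_succ]

lemma one_sub_X_mul_X_pow_mul_diagSeries_multichoose (k : ℕ) :
    (1 - X 0 * X 1) ^ k * diagSeries (fun i => (k.multichoose i : ℤ)) = 1 := by
  induction k with
  | zero => rw [pow_zero, one_mul, diagSeries_multichoose_zero]
  | succ k ih =>
    rw [pow_succ, mul_assoc, one_sub_X_mul_X_mul_diagSeries_multichoose_succ, ih]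

lemma betti_eq_multichoose (k i n : ℕ) :
    betti k i n = (if i ≤ n then (k.multichoose i : ℤ) else 0) +
      if 0 < i ∧ i < n then (k.multichoose (i - 1) : ℤ) else 0 := by
  rcases Nat.eq_zero_or_pos i with rfl | hi
  · simp [betti]
    omega
  · have h : i + k - 2 = k + (i - 1) - 1 := by omega
    rw [betti, Nat.multichoose_eq, Nat.multichoose_eq, h, add_comm i k]
    split_ifs <;> omega

lemma one_sub_X_mul_genSeries_betti (k : ℕ) :
    (1 - X 1) * genSeries (betti k) =
      (1 + X 0 * X 1 ^ 2) * diagSeries fun i => (k.multichoose i : ℤ) := by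
  have hY := X_zero_pow_mul_X_one_pow_mul_genSeries 0 1 (betti k)
  have hXY2 := X_zero_pow_mul_X_one_pow_mul_genSeries 1 2
    (fun i n => if i = n then (k.multichoose i : ℤ) else 0)
  simp only [pow_zero, one_mul, pow_one, zero_le, true_and, Nat.sub_zero] at hY
  rw [pow_one] at hXY2
  rw [sub_mul, one_mul, hY, genSeries_sub, add_mul, one_mul, diagSeries, hXY2, genSeries_add]
  congr 1
  funext i n
  simp only [betti_eq_multichoose]
  split_ifs <;> omega

theorem betti_generating_function_general (k : ℕ) :
    (1 - MvPowerSeries.X 1) * (1 - MvPowerSeries.X 0 * MvPowerSeries.X 1) ^ k *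
      genSeries (betti k) =
    1 + MvPowerSeries.X 0 * MvPowerSeries.X 1 ^ 2 := by
  calc (1 - X 1) * (1 - X 0 * X 1) ^ k * genSeries (betti k)
      = (1 - X 0 * X 1) ^ k * ((1 - X 1) * genSeries (betti k)) := by ring
    _ = (1 + X 0 * X 1 ^ 2) *
          ((1 - X 0 * X 1) ^ k * diagSeries fun i => (k.multichoose i : ℤ)) := by
      rw [one_sub_X_mul_genSeries_betti]; ring
    _ = 1 + X 0 * X 1 ^ 2 := by rw [one_sub_X_mul_X_pow_mul_diagSeries_multichoose, mul_one]

/-- The generating series of the Betti numbers of `C_n(ℂ∖k)` is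
`(1 + xy²) / ((1 - y)(1 - xy)^k)`. -/
theorem betti_generating_function (k : ℕ) (hk : 1 ≤ k) :
    (1 - MvPowerSeries.X 1) * (1 - MvPowerSeries.X 0 * MvPowerSeries.X 1) ^ k *
      genSeries (betti k) =
    1 + MvPowerSeries.X 0 * MvPowerSeries.X 1 ^ 2 :=
  betti_generating_function_general k
end

section
/- Fix an integer k ≥ 1. For n ∈ ℕ define the polynomial S n ∈ ℤ[x] by S n = ∑_{j=0}^{n} (−1)^j · binom(j+k−1, j) · x^{2(n−j)} − ∑_{j=0}^{n−2} (−1)^j · binom(j+k−1, j) · x^{2(n−1−j)} (the second sum being empty for n < 2). Then in the ring (ℤ[x])[[y]] one has (1 − x²·y) · (1 + y)^k · (∑_{n≥0} S n · y^n) = 1 − x²·y². (The polynomials S n are the virtual Poincaré polynomials S(C_n(ℂ∖k)), whose generating series by Getzler's theorem is (1−y²x²)/((1−yx²)(1+y)^k).) -/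
/-! The series `A = ∑ (-1)^j binom(j+k-1, j) yʲ` and `G = ∑ x²ⁿ yⁿ` invert `(1 + y)^k` and
`1 - x²y`, and the two sums defining `S n` say exactly that `∑ S n yⁿ = A G - y A (G - 1)`.
Multiplying by `(1 - x²y)(1 + y)^k` therefore leaves `1 - y (1 - (1 - x²y)) = 1 - x²y²`. -/

/-- The virtual Poincaré polynomial `S(C_n(ℂ∖k)) ∈ ℤ[x]` of the unordered
configuration space of `n` points in the plane with `k` points removed. -/
noncomputable def virtualPoincare (k n : ℕ) : Polynomial ℤ :=
  (∑ j ∈ Finset.range (n + 1),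
      Polynomial.C ((-1 : ℤ) ^ j * ((j + k - 1).choose j : ℤ)) * Polynomial.X ^ (2 * (n - j))) -
  ∑ j ∈ Finset.range (n - 1),
      Polynomial.C ((-1 : ℤ) ^ j * ((j + k - 1).choose j : ℤ)) * Polynomial.X ^ (2 * (n - 1 - j))

namespace PowerSeries

variable {R : Type*} [CommRing R]

theorem one_sub_C_mul_X_mul_mk_pow (a : R) : (1 - C a * X) * mk (a ^ ·) = 1 := by
  simpa [mul_comm, rescale_mk] using congrArg (rescale a) (mk_one_mul_one_sub_eq_one R)

theorem one_add_X_pow_mul_mk_neg_one_pow_mul_choose (k : ℕ) :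
    (1 + X) ^ k * mk (fun j ↦ (-1 : R) ^ j * (j + k - 1).choose j) = 1 := by
  cases k with
  | zero => ext (_ | n) <;> simp
  | succ d =>
    have h := congrArg (rescale (-1 : R)) (mk_add_choose_mul_one_sub_pow_eq_one R d)
    rw [map_mul, map_pow, map_sub, map_one, rescale_neg_one_X, sub_neg_eq_add, rescale_mk,
      mul_comm] at h
    convert h using 4 with j
    rw [show j + (d + 1) - 1 = j + d by omega, Nat.choose_symm_add, add_comm j d]

theorem coeff_mul_sub_C_constantCoeff (f g : R⟦X⟧) (n : ℕ) :
    coeff n (f * (g - C (constantCoeff g))) =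
      ∑ j ∈ Finset.range n, coeff j f * coeff (n - j) g := by
  rw [coeff_mul, Finset.Nat.sum_antidiagonal_eq_sum_range_succ_mk, Finset.sum_range_succ]
  simp only [map_sub, coeff_C, coeff_zero_eq_constantCoeff_apply, Nat.sub_self, if_true, sub_self,
    mul_zero, add_zero]
  refine Finset.sum_congr rfl fun j hj ↦ ?_
  rw [if_neg (by simp at hj; omega), sub_zero]

theorem mk_sum_sub_sum_eq (c g : ℕ → R) :
    mk (fun n ↦ ∑ j ∈ Finset.range (n + 1), c j * g (n - j) -
        ∑ j ∈ Finset.range (n - 1), c j * g (n - 1 - j)) =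
      mk c * mk g - X * (mk c * (mk g - C (g 0))) := by
  ext (_ | n)
  · simp
  · have := coeff_mul_sub_C_constantCoeff (mk c) (mk g) n
    simp only [coeff_mk, constantCoeff_mk] at this
    rw [map_sub, coeff_succ_X_mul, this, coeff_mul, Finset.Nat.sum_antidiagonal_eq_sum_range_succ_mk]
    simp

end PowerSeries

open PowerSeries in
theorem mk_virtualPoincare (k : ℕ) :
    mk (virtualPoincare k) =
      (mk fun j ↦ (-1) ^ j * ((j + k - 1).choose j : Polynomial ℤ)) * mk ((Polynomial.X ^ 2) ^ ·) -
        X * ((mk fun j ↦ (-1) ^ j * ((j + k - 1).choose j : Polynomial ℤ)) *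
          (mk ((Polynomial.X ^ 2) ^ ·) - 1)) := by
  convert mk_sum_sub_sum_eq (fun j ↦ Polynomial.C ((-1 : ℤ) ^ j * ((j + k - 1).choose j : ℤ)))
    (fun m ↦ (Polynomial.X : Polynomial ℤ) ^ (2 * m)) using 3 <;> simp [virtualPoincare, pow_mul]

theorem getzler_generating_function_general (k : ℕ) :
    (1 - PowerSeries.C (R := Polynomial ℤ) (Polynomial.X ^ 2) * PowerSeries.X) *
      (1 + PowerSeries.X) ^ k * PowerSeries.mk (virtualPoincare k) =
    1 - PowerSeries.C (R := Polynomial ℤ) (Polynomial.X ^ 2) * PowerSeries.X ^ 2 := by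
  open PowerSeries in
  set a : Polynomial ℤ := Polynomial.X ^ 2
  set A : (Polynomial ℤ)⟦X⟧ := mk fun j ↦ (-1) ^ j * (j + k - 1).choose j
  set G : (Polynomial ℤ)⟦X⟧ := mk (a ^ ·)
  have hA : (1 + X) ^ k * A = 1 := one_add_X_pow_mul_mk_neg_one_pow_mul_choose k
  have hG : (1 - C a * X) * G = 1 := one_sub_C_mul_X_mul_mk_pow a
  rw [mk_virtualPoincare]
  linear_combination ((1 - C a * X) * G * (1 - X) + X * (1 - C a * X)) * hA + (1 - X) * hG

/-- Getzler's theorem: the generating series of the virtual Poincaré polynomials of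
`C_n(ℂ∖k)` is `(1 - y²x²) / ((1 - yx²)(1 + y)^k)`, as an identity in `(ℤ[x])[[y]]`. -/
theorem getzler_generating_function (k : ℕ) (hk : 1 ≤ k) :
    (1 - PowerSeries.C (R := Polynomial ℤ) (Polynomial.X ^ 2) * PowerSeries.X) *
      (1 + PowerSeries.X) ^ k * PowerSeries.mk (virtualPoincare k) =
    1 - PowerSeries.C (R := Polynomial ℤ) (Polynomial.X ^ 2) * PowerSeries.X ^ 2 :=
  getzler_generating_function_general k
end

section
/- Fix an integer k ≥ 1 and n ∈ ℕ. Define real-valued functions: P n (u) = binom(n+k−1, n)·u^n + ∑_{i=0}^{n−1} (binom(i+k−1, i) + (if i ≥ 1 then binom(i+k−2, i−1) else 0))·u^i, and S n (x) = ∑_{j=0}^{n} (−1)^j · binom(j+k−1, j) · x^{2(n−j)} − ∑_{j=0}^{n−2} (−1)^j · binom(j+k−1, j) · x^{2(n−1−j)}. Then for every real number x ≠ 0, S n (x) = x^{2n} · P n (−1/x²). (This is the duality between the Poincaré polynomial P(C_n(ℂ∖k)) and the virtual Poincaré polynomial S(C_n(ℂ∖k)) of unordered configuration spaces under the substitution x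 → −1/x², y → yx².) -/
/-!
Multiplying by `x ^ (2 * n)` turns `(-1 / x ^ 2) ^ i` into `(-1) ^ i * x ^ (2 * (n - i))`.
The coefficient `binom(i + k - 1, i)` of `P` then yields the first sum of `S` term by term,
while `binom(i + k - 2, i - 1)` is the same sequence shifted up one degree: the shift costs one
sign and one factor `x ^ 2`, which produces the subtracted sum of `S`.
-/

open Finset

lemma pow_two_mul_mul_neg_one_div_sq_pow {K : Type*} [Field K] {x : K} (hx : x ≠ 0)
    {n i : ℕ} (hi : i ≤ n) :
    x ^ (2 * n) * (-1 / x ^ 2) ^ i = (-1) ^ i * x ^ (2 * (n - i)) := by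
  have hsplit : x ^ (2 * n) = x ^ (2 * (n - i)) * (x ^ 2) ^ i := by
    rw [← pow_mul, ← pow_add]
    congr 1
    omega
  rw [div_pow, hsplit]
  field_simp

lemma pow_two_mul_sum_mul_neg_one_div_sq_pow {K : Type*} [Field K] {x : K} (hx : x ≠ 0)
    {n : ℕ} {s : Finset ℕ} (hs : ∀ i ∈ s, i ≤ n) (c : ℕ → K) :
    x ^ (2 * n) * ∑ i ∈ s, c i * (-1 / x ^ 2) ^ i =
      ∑ i ∈ s, c i * ((-1) ^ i * x ^ (2 * (n - i))) := by
  rw [mul_sum]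
  refine sum_congr rfl fun i hi => ?_
  rw [mul_left_comm, pow_two_mul_mul_neg_one_div_sq_pow hx (hs i hi)]

lemma sum_range_ite_one_le {M : Type*} [AddCommMonoid M] (n : ℕ) (f : ℕ → M) :
    ∑ i ∈ range n, (if 1 ≤ i then f i else 0) = ∑ j ∈ range (n - 1), f (j + 1) := by
  cases n with
  | zero => simp
  | succ m => simp [sum_range_succ']

theorem unordered_duality_general (k : ℕ) (n : ℕ) (P S : ℝ → ℝ)
    (hP : ∀ u : ℝ, P u = ((n + k - 1).choose n : ℝ) * u ^ n +
      ∑ i ∈ Finset.range n,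
        (((i + k - 1).choose i : ℝ) +
          (if 1 ≤ i then ((i + k - 2).choose (i - 1) : ℝ) else 0)) * u ^ i)
    (hS : ∀ x : ℝ, S x =
      (∑ j ∈ Finset.range (n + 1),
        (-1 : ℝ) ^ j * ((j + k - 1).choose j : ℝ) * x ^ (2 * (n - j))) -
      ∑ j ∈ Finset.range (n - 1),
        (-1 : ℝ) ^ j * ((j + k - 1).choose j : ℝ) * x ^ (2 * (n - 1 - j))) :
    ∀ x : ℝ, x ≠ 0 → S x = x ^ (2 * n) * P (-1 / x ^ 2) := by
  intro x hx
  have hP_split : ∀ u, P u = ∑ i ∈ range (n + 1), ((i + k - 1).choose i : ℝ) * u ^ i +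
      ∑ i ∈ range n, (if 1 ≤ i then ((i + k - 2).choose (i - 1) : ℝ) else 0) * u ^ i := by
    intro u
    rw [hP, sum_range_succ]
    simp only [add_mul, sum_add_distrib]
    ring
  rw [hS, hP_split, mul_add,
    pow_two_mul_sum_mul_neg_one_div_sq_pow hx (fun i hi => Nat.le_of_lt_succ (mem_range.mp hi)),
    pow_two_mul_sum_mul_neg_one_div_sq_pow hx (fun i hi => (mem_range.mp hi).le)]
  simp only [ite_zero_mul, sum_range_ite_one_le]
  rw [sub_eq_add_neg, ← sum_neg_distrib]
  congr 1
  · exact sum_congr rfl fun i _ => by ring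
  · refine sum_congr rfl fun j hj => ?_
    have hjn : j < n - 1 := mem_range.mp hj
    rw [show j + 1 + k - 2 = j + k - 1 by omega, Nat.add_sub_cancel,
      show n - (j + 1) = n - 1 - j by omega, pow_succ]
    ring

/-- Duality between the Poincaré polynomial `P(C_n(ℂ∖k))` and the virtual Poincaré
polynomial `S(C_n(ℂ∖k))` of unordered configuration spaces under the substitution
`x → -1/x²`, `y → yx²`: one has `S n (x) = x^(2n) · P n (-1/x²)` for `x ≠ 0`. -/
theorem unordered_duality (k : ℕ) (hk : 1 ≤ k) (n : ℕ) (P S : ℝ → ℝ)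
    (hP : ∀ u : ℝ, P u = ((n + k - 1).choose n : ℝ) * u ^ n +
      ∑ i ∈ Finset.range n,
        (((i + k - 1).choose i : ℝ) +
          (if 1 ≤ i then ((i + k - 2).choose (i - 1) : ℝ) else 0)) * u ^ i)
    (hS : ∀ x : ℝ, S x =
      (∑ j ∈ Finset.range (n + 1),
        (-1 : ℝ) ^ j * ((j + k - 1).choose j : ℝ) * x ^ (2 * (n - j))) -
      ∑ j ∈ Finset.range (n - 1),
        (-1 : ℝ) ^ j * ((j + k - 1).choose j : ℝ) * x ^ (2 * (n - 1 - j))) :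
    ∀ x : ℝ, x ≠ 0 → S x = x ^ (2 * n) * P (-1 / x ^ 2) :=
  unordered_duality_general k n P S hP hS
end
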